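/- arXiv:1703.09107 — 2 statements merged into one kernel-verified Lean document; each statement's English description precedes it below -/
import Mathlib

section
/- Let p ≥ 0 and c ∈ C(I) with min_I c > −(π/(b−a))⁴ − p(π/(b−a))². Then the homogeneous problem u⁗ − p u'' + c u = 0 on I with u(a)=u(b)=u''(a)=u''(b)=0 has only the trivial solution u ≡ 0 among C⁴(I) functions. -/
/-!
Multiplying the equation by `u` and integrating by parts (the boundary terms vanish by the
simply supported conditions) gives `∫ u''² + p ∫ u'² + ∫ c u² = 0`. Wirtinger's inequality
`k² ∫ u² ≤ ∫ u'²`, `k = π / (b - a)`, together with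
`0 ≤ ∫ (u'' + k² u)² = ∫ u''² - 2 k² ∫ u'² + k⁴ ∫ u²` gives
`∫ u''² + p ∫ u'² ≥ (k⁴ + p k²) ∫ u²`. Hence `∫ (k⁴ + p k² + c) u² ≤ 0` with a positive
continuous weight, so `u = 0`.

Wirtinger's inequality is proved for `|κ| (b - a) < π` with the positive weight
`w = cos (κ (t - m))`, `m` the midpoint, for which `(f² w' / w)' ≤ f'² - κ² f²`;
then `κ ↑ π / (b - a)`.
-/

open Real Set MeasureTheory Filter Topology

lemma eqOn_zero_of_integral_eq_zero_of_nonneg {f : ℝ → ℝ} {a b : ℝ} (hab : a < b)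
    (hf : ContinuousOn f (Icc a b)) (hf₀ : ∀ x ∈ Icc a b, 0 ≤ f x)
    (h : ∫ x in a..b, f x = 0) : EqOn f 0 (Icc a b) := by
  have hfi : IntervalIntegrable f volume a b :=
    hf.intervalIntegrable_of_Icc hab.le
  have hae : 0 ≤ᵐ[volume.restrict (Ioc a b)] f :=
    ae_restrict_of_forall_mem measurableSet_Ioc fun x hx => hf₀ x (Ioc_subset_Icc_self hx)
  have h0 := (intervalIntegral.integral_eq_zero_iff_of_le_of_nonneg_ae hab.le hae hfi).mp h
  rw [Measure.restrict_congr_set Ioc_ae_eq_Icc] at h0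
  exact Measure.eqOn_Icc_of_ae_eq volume hab.ne h0 hf continuousOn_const

lemma hasDerivAt_sq_mul_tan {f : ℝ → ℝ} {f' κ m t : ℝ} (hf : HasDerivAt f f' t)
    (hcos : cos (κ * (m - t)) ≠ 0) :
    HasDerivAt (fun t => κ * f t ^ 2 * tan (κ * (m - t)))
      (f' ^ 2 - κ ^ 2 * f t ^ 2 - (f' - κ * f t * tan (κ * (m - t))) ^ 2) t := by
  have hθ : HasDerivAt (fun t => κ * (m - t)) (-κ) t := by
    simpa using ((hasDerivAt_id t).const_sub m).const_mul κ
  refine (((hf.pow 2).const_mul κ).mul ((hasDerivAt_tan hcos).comp t hθ)).congr_deriv ?_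
  simp only [Function.comp_apply, Pi.pow_apply, tan_eq_sin_div_cos]
  field_simp
  linear_combination κ ^ 2 * f t ^ 2 * sin_sq_add_cos_sq (κ * (m - t))

theorem wirtinger_of_abs_mul_lt_pi {f : ℝ → ℝ} {a b κ : ℝ} (hab : a ≤ b) (hf : ContDiff ℝ 1 f)
    (ha : f a = 0) (hb : f b = 0) (hκ : |κ| * (b - a) < π) :
    κ ^ 2 * ∫ t in a..b, f t ^ 2 ≤ ∫ t in a..b, deriv f t ^ 2 := by
  have hfd : Differentiable ℝ f := hf.differentiable one_ne_zero
  have hcos : ∀ t ∈ Icc a b, cos (κ * ((a + b) / 2 - t)) ≠ 0 := by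
    intro t ht
    refine (cos_pos_of_mem_Ioo (abs_lt.mp ?_)).ne'
    have : |(a + b) / 2 - t| ≤ (b - a) / 2 :=
      abs_le.mpr ⟨by linarith [ht.2], by linarith [ht.1]⟩
    calc |κ * ((a + b) / 2 - t)| = |κ| * |(a + b) / 2 - t| := abs_mul _ _
      _ ≤ |κ| * ((b - a) / 2) := by gcongr
      _ < π / 2 := by linarith
  have hH := fun t (ht : t ∈ Icc a b) => hasDerivAt_sq_mul_tan (hfd t).hasDerivAt (hcos t ht)
  have hf'2 : Continuous fun t => deriv f t ^ 2 := (hf.continuous_deriv le_rfl).pow 2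
  have hf2 : Continuous fun t => κ ^ 2 * f t ^ 2 := continuous_const.mul (hfd.continuous.pow 2)
  have hle := intervalIntegral.sub_le_integral_of_hasDeriv_right_of_le
    (φ := fun t => deriv f t ^ 2 - κ ^ 2 * f t ^ 2) hab
    (fun t ht => (hH t ht).continuousAt.continuousWithinAt)
    (fun t ht => (hH t (Ioo_subset_Icc_self ht)).hasDerivWithinAt)
    (hf'2.sub hf2).integrableOn_Icc (fun t _ => sub_le_self _ (sq_nonneg _))
  rw [intervalIntegral.integral_sub (hf'2.intervalIntegrable a b) (hf2.intervalIntegrable a b),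
    intervalIntegral.integral_const_mul] at hle
  simp only [ha, hb] at hle
  linarith

theorem wirtinger {f : ℝ → ℝ} {a b : ℝ} (hab : a < b) (hf : ContDiff ℝ 1 f)
    (ha : f a = 0) (hb : f b = 0) :
    (π / (b - a)) ^ 2 * ∫ t in a..b, f t ^ 2 ≤ ∫ t in a..b, deriv f t ^ 2 := by
  have hba : 0 < b - a := sub_pos.mpr hab
  have hk : 0 < π / (b - a) := div_pos pi_pos hba
  refine le_of_tendsto ((continuous_pow 2 |>.mul continuous_const).tendsto _
    |>.mono_left (nhdsWithin_le_nhds (s := Iio (π / (b - a))))) ?_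
  filter_upwards [Ioo_mem_nhdsLT hk] with κ hκ
  refine wirtinger_of_abs_mul_lt_pi hab.le hf ha hb ?_
  rw [abs_of_pos hκ.1, ← lt_div_iff₀ hba]
  exact hκ.2

lemma integral_deriv_mul_eq_neg_integral_mul_deriv {f g : ℝ → ℝ} {a b : ℝ}
    (hf : ContDiff ℝ 1 f) (hg : ContDiff ℝ 1 g) (ha : g a = 0) (hb : g b = 0) :
    ∫ x in a..b, deriv f x * g x = -∫ x in a..b, f x * deriv g x := by
  have := intervalIntegral.integral_mul_deriv_eq_deriv_mul
    (fun x _ => ((hf.differentiable one_ne_zero) x).hasDerivAt)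
    (fun x _ => ((hg.differentiable one_ne_zero) x).hasDerivAt)
    ((hf.continuous_deriv le_rfl).intervalIntegrable a b)
    ((hg.continuous_deriv le_rfl).intervalIntegrable a b)
  rw [this, ha, hb]
  ring

section SimplySupported

variable {u : ℝ → ℝ} {a b : ℝ}

lemma integral_iteratedDeriv_two_mul_self (hu : ContDiff ℝ 2 u) (ha : u a = 0) (hb : u b = 0) :
    ∫ x in a..b, iteratedDeriv 2 u x * u x = -∫ x in a..b, deriv u x ^ 2 := by
  rw [iteratedDeriv_succ, iteratedDeriv_one,
    integral_deriv_mul_eq_neg_integral_mul_deriv (hu.deriv' (n := 1)) (hu.of_le one_le_two) ha hb]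
  simp only [sq]

lemma integral_iteratedDeriv_four_mul_self (hu : ContDiff ℝ 4 u) (ha : u a = 0) (hb : u b = 0)
    (ha'' : iteratedDeriv 2 u a = 0) (hb'' : iteratedDeriv 2 u b = 0) :
    ∫ x in a..b, iteratedDeriv 4 u x * u x = ∫ x in a..b, iteratedDeriv 2 u x ^ 2 := by
  have hu' : ContDiff ℝ 1 (deriv u) := (hu.of_le (by norm_num) : ContDiff ℝ (1 + 1) u).deriv'
  have hu'' : ContDiff ℝ 1 (iteratedDeriv 2 u) :=
    (contDiff_nat_succ_iff_contDiff_one_iteratedDeriv.mp (hu.of_le (by norm_num))).2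
  have hu''' : ContDiff ℝ 1 (iteratedDeriv 3 u) :=
    (contDiff_nat_succ_iff_contDiff_one_iteratedDeriv.mp hu).2
  have h4 : ∫ x in a..b, iteratedDeriv 4 u x * u x =
      -∫ x in a..b, iteratedDeriv 3 u x * deriv u x := by
    rw [iteratedDeriv_succ, integral_deriv_mul_eq_neg_integral_mul_deriv hu'''
      (hu.of_le (by norm_num)) ha hb]
  have h2 : ∫ x in a..b, iteratedDeriv 2 u x * iteratedDeriv 2 u x =
      -∫ x in a..b, deriv u x * iteratedDeriv 3 u x := by
    rw [iteratedDeriv_succ (n := 2),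
      ← integral_deriv_mul_eq_neg_integral_mul_deriv hu' hu'' ha'' hb'', iteratedDeriv_succ,
      iteratedDeriv_one]
  simp only [sq, h4, h2, mul_comm (deriv u _)]

lemma wirtinger_iteratedDeriv_two (hab : a < b) (hu : ContDiff ℝ 2 u) (ha : u a = 0)
    (hb : u b = 0) :
    (π / (b - a)) ^ 4 * ∫ x in a..b, u x ^ 2 ≤ ∫ x in a..b, iteratedDeriv 2 u x ^ 2 := by
  set k := π / (b - a)
  have hW := wirtinger hab (hu.of_le one_le_two) ha hb
  have hu2 : Continuous (iteratedDeriv 2 u) := hu.continuous_iteratedDeriv' 2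
  have hu0 : Continuous u := hu.continuous
  have hsq : 0 ≤ ∫ x in a..b, (iteratedDeriv 2 u x + k ^ 2 * u x) ^ 2 :=
    intervalIntegral.integral_nonneg hab.le fun x _ => sq_nonneg _
  have hexp : ∫ x in a..b, (iteratedDeriv 2 u x + k ^ 2 * u x) ^ 2 =
      (∫ x in a..b, iteratedDeriv 2 u x ^ 2) +
        2 * k ^ 2 * (∫ x in a..b, iteratedDeriv 2 u x * u x) + k ^ 4 * ∫ x in a..b, u x ^ 2 := by
    rw [intervalIntegral.integral_congr (g := fun x => iteratedDeriv 2 u x ^ 2 +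
        2 * k ^ 2 * (iteratedDeriv 2 u x * u x) + k ^ 4 * u x ^ 2) fun x _ => by ring,
      intervalIntegral.integral_add (Continuous.intervalIntegrable (by fun_prop) _ _)
        (Continuous.intervalIntegrable (by fun_prop) _ _),
      intervalIntegral.integral_add (Continuous.intervalIntegrable (by fun_prop) _ _)
        (Continuous.intervalIntegrable (by fun_prop) _ _),
      intervalIntegral.integral_const_mul, intervalIntegral.integral_const_mul]
  rw [hexp, integral_iteratedDeriv_two_mul_self hu ha hb] at hsq
  nlinarith [sq_nonneg k]

lemma eigenvalue_mul_integral_sq_le (hab : a < b) {p : ℝ} (hp : 0 ≤ p) (hu : ContDiff ℝ 2 u)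
    (ha : u a = 0) (hb : u b = 0) :
    ((π / (b - a)) ^ 4 + p * (π / (b - a)) ^ 2) * ∫ x in a..b, u x ^ 2 ≤
      (∫ x in a..b, iteratedDeriv 2 u x ^ 2) + p * ∫ x in a..b, deriv u x ^ 2 := by
  have h4 := wirtinger_iteratedDeriv_two hab hu ha hb
  have h2 := mul_le_mul_of_nonneg_left (wirtinger hab (hu.of_le one_le_two) ha hb) hp
  linarith

lemma integral_energy_eq_zero (hab : a ≤ b) {p : ℝ} {c : ℝ → ℝ} (hc : ContinuousOn c (Icc a b))
    (hu : ContDiff ℝ 4 u)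
    (heq : ∀ t ∈ Icc a b, iteratedDeriv 4 u t - p * iteratedDeriv 2 u t + c t * u t = 0)
    (ha : u a = 0) (hb : u b = 0)
    (ha'' : iteratedDeriv 2 u a = 0) (hb'' : iteratedDeriv 2 u b = 0) :
    (∫ x in a..b, iteratedDeriv 2 u x ^ 2) + p * (∫ x in a..b, deriv u x ^ 2) +
      ∫ x in a..b, c x * u x ^ 2 = 0 := by
  have hu4 : Continuous (iteratedDeriv 4 u) := hu.continuous_iteratedDeriv' 4
  have hu2 : Continuous (iteratedDeriv 2 u) := hu.continuous_iteratedDeriv 2 (by norm_num)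
  have hu0 : Continuous u := hu.continuous
  have hcu : IntervalIntegrable (fun x => c x * u x ^ 2) volume a b :=
    (hc.mul (hu0.pow 2).continuousOn).intervalIntegrable_of_Icc hab
  have hzero : ∫ x in a..b, (iteratedDeriv 4 u x * u x - p * (iteratedDeriv 2 u x * u x) +
      c x * u x ^ 2) = 0 := by
    rw [intervalIntegral.integral_congr (g := fun _ => 0) fun x hx => by
      linear_combination u x * heq x (uIcc_of_le hab ▸ hx)]
    exact intervalIntegral.integral_zero
  rw [intervalIntegral.integral_add (Continuous.intervalIntegrable (by fun_prop) _ _) hcu,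
    intervalIntegral.integral_sub (Continuous.intervalIntegrable (by fun_prop) _ _)
      (Continuous.intervalIntegrable (by fun_prop) _ _),
    intervalIntegral.integral_const_mul, integral_iteratedDeriv_four_mul_self hu ha hb ha'' hb'',
    integral_iteratedDeriv_two_mul_self (hu.of_le (by norm_num)) ha hb] at hzero
  linarith

end SimplySupported

/-- If `min_I c > -(π/(b-a))⁴ - p(π/(b-a))²`, the homogeneous simply supported
beam problem `u⁗ - p u'' + c u = 0`, `u(a)=u(b)=u''(a)=u''(b)=0`, has only the
trivial solution. -/
theorem stmt_11 (a b p : ℝ) (hab : a < b) (hp : 0 ≤ p) (c : ℝ → ℝ)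
    (hc : ContinuousOn c (Set.Icc a b))
    (hcmin : ∀ t ∈ Set.Icc a b,
      -(π / (b - a)) ^ 4 - p * (π / (b - a)) ^ 2 < c t)
    (u : ℝ → ℝ) (hu : ContDiff ℝ 4 u)
    (heq : ∀ t ∈ Set.Icc a b,
      iteratedDeriv 4 u t - p * iteratedDeriv 2 u t + c t * u t = 0)
    (hua : u a = 0) (hub : u b = 0)
    (hua'' : iteratedDeriv 2 u a = 0) (hub'' : iteratedDeriv 2 u b = 0) :
    ∀ t ∈ Set.Icc a b, u t = 0 := by
  set μ := (π / (b - a)) ^ 4 + p * (π / (b - a)) ^ 2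
  have hpos : ∀ t ∈ Icc a b, 0 < μ + c t := fun t ht => by linarith [hcmin t ht]
  have hcont : ContinuousOn (fun t => (μ + c t) * u t ^ 2) (Icc a b) :=
    (continuousOn_const.add hc).mul (hu.continuous.pow 2).continuousOn
  have hcu : IntervalIntegrable (fun t => c t * u t ^ 2) volume a b :=
    (hc.mul (hu.continuous.pow 2).continuousOn).intervalIntegrable_of_Icc hab.le
  have hsplit : ∫ t in a..b, (μ + c t) * u t ^ 2 =
      μ * (∫ t in a..b, u t ^ 2) + ∫ t in a..b, c t * u t ^ 2 := by
    rw [intervalIntegral.integral_congr (g := fun t => μ * u t ^ 2 + c t * u t ^ 2)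
        fun t _ => by ring,
      intervalIntegral.integral_add (Continuous.intervalIntegrable (by fun_prop) _ _) hcu,
      intervalIntegral.integral_const_mul]
  have hle : ∫ t in a..b, (μ + c t) * u t ^ 2 ≤ 0 := by
    linarith [eigenvalue_mul_integral_sq_le hab hp (hu.of_le (by norm_num)) hua hub,
      integral_energy_eq_zero hab.le hc hu heq hua hub hua'' hub'']
  have hzero := eqOn_zero_of_integral_eq_zero_of_nonneg hab hcont
    (fun t ht => mul_nonneg (hpos t ht).le (sq_nonneg _))
    (hle.antisymm (intervalIntegral.integral_nonneg hab.le fun t ht =>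
      mul_nonneg (hpos t ht).le (sq_nonneg _)))
  intro t ht
  simpa [(hpos t ht).ne'] using hzero ht
end

section
/- Let a < b, p ≥ 0, and c ∈ C([a,b]) with −(π/(b−a))⁴ − p(π/(b−a))² < c(t) ≤ 0 for all t. Suppose u ∈ C⁴([a,b]) satisfies u⁗ − pu'' + cu = 0 on [a,b] and u(a)=u(b)=u''(a)=u''(b)=0. Then ∫_a^b (u'')² dt + p∫_a^b(u')² dt + ∫_a^b c u² dt = 0, and consequently u ≡ 0. -/
open Real MeasureTheory Set intervalIntegral

lemma wirt_aux {a b : ℝ} (hab : a < b) {u : ℝ → ℝ}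
    (hud : Differentiable ℝ u) (hud' : Continuous (deriv u))
    (ha : u a = 0) (hb : u b = 0) {k' : ℝ} (hk0 : 0 < k')
    (hkk : k' < π / (b - a)) :
    k' ^ 2 * ∫ t in a..b, u t ^ 2 ≤ ∫ t in a..b, deriv u t ^ 2 := by
  have hba : (0:ℝ) < b - a := sub_pos.mpr hab
  set δ : ℝ := (π - k' * (b - a)) / 2 with hδdef
  have hkb : k' * (b - a) < π := by
    have := (lt_div_iff₀ hba).mp hkk
    linarith
  have hδ0 : 0 < δ := by simp only [hδdef]; linarith
  set θ : ℝ → ℝ := fun t => k' * (t - a) + δ with hθdef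
  have hθmem : ∀ t ∈ Icc a b, θ t ∈ Ioo 0 π := by
    intro t ht
    have h1 : 0 ≤ k' * (t - a) := mul_nonneg hk0.le (by linarith [ht.1])
    have h2 : k' * (t - a) ≤ k' * (b - a) := by
      have := ht.2; nlinarith
    constructor
    · simp only [hθdef]; linarith
    · simp only [hθdef, hδdef]; linarith
  set s : ℝ → ℝ := fun t => Real.sin (θ t) with hsdef
  have hs : ∀ t ∈ Icc a b, 0 < s t := fun t ht =>
    Real.sin_pos_of_pos_of_lt_pi (hθmem t ht).1 (hθmem t ht).2
  set ψ : ℝ → ℝ := fun t => Real.cos (θ t) / s t with hψdef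
  set ψ' : ℝ → ℝ := fun t => -(k' / s t ^ 2) with hψ'def
  have hθd : ∀ t : ℝ, HasDerivAt θ k' t := by
    intro t
    have : HasDerivAt (fun t : ℝ => k' * (t - a) + δ) (k' * 1) t :=
      (((hasDerivAt_id t).sub_const a).const_mul k').add_const δ
    simpa only [mul_one] using this
  have hψd : ∀ t ∈ Icc a b, HasDerivAt ψ (ψ' t) t := by
    intro t ht
    have hsne : s t ≠ 0 := (hs t ht).ne'
    have hsin : HasDerivAt s (Real.cos (θ t) * k') t :=
      (Real.hasDerivAt_sin (θ t)).comp t (hθd t)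
    have hcos : HasDerivAt (fun t => Real.cos (θ t)) (-Real.sin (θ t) * k') t :=
      (Real.hasDerivAt_cos (θ t)).comp t (hθd t)
    have hd := hcos.div hsin hsne
    have h1 : Real.sin (θ t) ^ 2 + Real.cos (θ t) ^ 2 = 1 := Real.sin_sq_add_cos_sq _
    have heq : ψ' t = (-Real.sin (θ t) * k' * s t - Real.cos (θ t) * (Real.cos (θ t) * k')) / s t ^ 2 := by
      simp only [hψ'def, hsdef]
      set x := Real.sin (θ t) with hx
      set y := Real.cos (θ t) with hy
      have hx0 : x ≠ 0 := by rwa [hsdef] at hsne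
      field_simp
      linear_combination h1
    rw [heq]
    exact hd
  set G : ℝ → ℝ := fun t => u t ^ 2 * ψ t with hGdef
  set G' : ℝ → ℝ := fun t => 2 * u t * deriv u t * ψ t + u t ^ 2 * ψ' t with hG'def
  have hGd : ∀ t ∈ Icc a b, HasDerivAt G (G' t) t := by
    intro t ht
    have h1 : HasDerivAt (fun t => u t ^ 2) (2 * u t * deriv u t) t := by
      have := ((hud t).hasDerivAt.fun_pow 2)
      simpa [mul_comm, mul_assoc] using this
    simpa [hG'def] using h1.fun_mul (hψd t ht)
  -- continuity
  have hθc : Continuous θ := by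
    simp only [hθdef]
    exact (continuous_const.mul (continuous_id.sub continuous_const)).add continuous_const
  have hsc : Continuous s := Real.continuous_sin.comp hθc
  have hψc : ContinuousOn ψ (Icc a b) := by
    apply ContinuousOn.div
    · exact (Real.continuous_cos.comp hθc).continuousOn
    · exact hsc.continuousOn
    · exact fun t ht => (hs t ht).ne'
  have hψ'c : ContinuousOn ψ' (Icc a b) := by
    apply ContinuousOn.neg
    apply ContinuousOn.div continuousOn_const
    · exact (hsc.pow 2).continuousOn
    · exact fun t ht => pow_ne_zero 2 (hs t ht).ne'
  have hG'c : ContinuousOn G' (Icc a b) := by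
    apply ContinuousOn.add
    · exact (((continuous_const.mul hud.continuous).mul hud').continuousOn.mul hψc)
    · exact ((hud.continuous.pow 2).continuousOn.mul hψ'c)
  have hInt : ∀ {g : ℝ → ℝ}, ContinuousOn g (Icc a b) → IntervalIntegrable g volume a b :=
    fun hg => hg.intervalIntegrable_of_Icc hab.le
  -- FTC for G
  have hG0 : ∫ t in a..b, G' t = 0 := by
    rw [intervalIntegral.integral_eq_sub_of_hasDerivAt
      (fun t ht => hGd t (by rwa [uIcc_of_le hab.le] at ht)) (hInt hG'c)]
    simp [hGdef, ha, hb]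
  -- pointwise identity
  have hpt : ∀ t ∈ Icc a b,
      deriv u t ^ 2 - k' ^ 2 * u t ^ 2
        = (deriv u t - k' * u t * ψ t) ^ 2 + k' * G' t := by
    intro t ht
    have hsne : s t ≠ 0 := (hs t ht).ne'
    have h1 : Real.sin (θ t) ^ 2 + Real.cos (θ t) ^ 2 = 1 := Real.sin_sq_add_cos_sq _
    simp only [hG'def, hψ'def, hψdef, hsdef]
    set x := Real.sin (θ t) with hx
    set y := Real.cos (θ t) with hy
    have hx0 : x ≠ 0 := by rwa [hsdef] at hsne
    have hq : (y/x)^2 - 1/x^2 = -1 := by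
      rw [div_pow]
      field_simp
      linarith [h1]
    linear_combination (-(k'^2) * u t ^ 2) * hq
  have hintu : IntervalIntegrable (fun t => u t ^ 2) volume a b :=
    hInt (hud.continuous.pow 2).continuousOn
  have hintu' : IntervalIntegrable (fun t => deriv u t ^ 2) volume a b :=
    hInt (hud'.pow 2).continuousOn
  have hintsq : IntervalIntegrable (fun t => (deriv u t - k' * u t * ψ t) ^ 2) volume a b := by
    apply hInt
    exact ((hud'.continuousOn.sub ((continuous_const.mul hud.continuous).continuousOn.mul hψc)).pow 2)
  have key : ∫ t in a..b, (deriv u t ^ 2 - k' ^ 2 * u t ^ 2)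
      = ∫ t in a..b, ((deriv u t - k' * u t * ψ t) ^ 2 + k' * G' t) := by
    apply intervalIntegral.integral_congr
    intro t ht
    rw [uIcc_of_le hab.le] at ht
    exact hpt t ht
  have hsplit : ∫ t in a..b, ((deriv u t - k' * u t * ψ t) ^ 2 + k' * G' t)
      = (∫ t in a..b, (deriv u t - k' * u t * ψ t) ^ 2) + k' * ∫ t in a..b, G' t := by
    rw [intervalIntegral.integral_add hintsq ((hInt hG'c).const_mul k'),
      intervalIntegral.integral_const_mul]
  have hnn : 0 ≤ ∫ t in a..b, (deriv u t - k' * u t * ψ t) ^ 2 :=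
    intervalIntegral.integral_nonneg hab.le (fun t _ => sq_nonneg _)
  have hfin : (∫ t in a..b, deriv u t ^ 2) - k' ^ 2 * ∫ t in a..b, u t ^ 2
      = (∫ t in a..b, (deriv u t - k' * u t * ψ t) ^ 2) := by
    rw [← intervalIntegral.integral_const_mul, ← intervalIntegral.integral_sub hintu' (hintu.const_mul _),
      key, hsplit, hG0]
    ring
  linarith [hfin ▸ hnn]

lemma wirt {a b : ℝ} (hab : a < b) {u : ℝ → ℝ}
    (hud : Differentiable ℝ u) (hud' : Continuous (deriv u))
    (ha : u a = 0) (hb : u b = 0) :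
    (π / (b - a)) ^ 2 * ∫ t in a..b, u t ^ 2 ≤ ∫ t in a..b, deriv u t ^ 2 := by
  set k : ℝ := π / (b - a) with hk
  have hk0 : 0 < k := div_pos Real.pi_pos (sub_pos.mpr hab)
  have htend : Filter.Tendsto (fun k' : ℝ => k' ^ 2 * ∫ t in a..b, u t ^ 2)
      (nhdsWithin k (Iio k)) (nhds (k ^ 2 * ∫ t in a..b, u t ^ 2)) :=
    (((continuous_pow 2).mul continuous_const).tendsto k).mono_left nhdsWithin_le_nhds
  refine le_of_tendsto htend ?_
  filter_upwards [Ioo_mem_nhdsLT_of_mem (⟨hk0, le_rfl⟩ : k ∈ Ioc 0 k)] with k' hk'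
  exact wirt_aux hab hud hud' ha hb hk'.1 hk'.2

lemma cs_int {a b : ℝ} (hab : a ≤ b) {f g : ℝ → ℝ}
    (hf : ContinuousOn f (Icc a b)) (hg : ContinuousOn g (Icc a b)) :
    (∫ t in a..b, f t * g t) ^ 2 ≤ (∫ t in a..b, f t ^ 2) * ∫ t in a..b, g t ^ 2 := by
  set A := ∫ t in a..b, f t ^ 2 with hA
  set B := ∫ t in a..b, f t * g t with hB
  set C := ∫ t in a..b, g t ^ 2 with hC
  have hIf2 : IntervalIntegrable (fun t => f t ^ 2) volume a b :=
    ((hf.pow 2)).intervalIntegrable_of_Icc hab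
  have hIfg : IntervalIntegrable (fun t => f t * g t) volume a b :=
    (hf.mul hg).intervalIntegrable_of_Icc hab
  have hIg2 : IntervalIntegrable (fun t => g t ^ 2) volume a b :=
    ((hg.pow 2)).intervalIntegrable_of_Icc hab
  have key : ∀ x : ℝ, 0 ≤ A * (x * x) + (2 * B) * x + C := by
    intro x
    have h0 : 0 ≤ ∫ t in a..b, (x * f t + g t) ^ 2 :=
      intervalIntegral.integral_nonneg hab (fun t _ => sq_nonneg _)
    have hexp : ∫ t in a..b, (x * f t + g t) ^ 2
        = A * (x * x) + (2 * B) * x + C := by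
      have : ∀ t, (x * f t + g t) ^ 2
          = (x * x) * f t ^ 2 + (2 * x) * (f t * g t) + g t ^ 2 := by intro t; ring
      simp_rw [this]
      rw [intervalIntegral.integral_add (((hIf2.const_mul _).add (hIfg.const_mul _)))
        hIg2, intervalIntegral.integral_add (hIf2.const_mul _) (hIfg.const_mul _),
        intervalIntegral.integral_const_mul, intervalIntegral.integral_const_mul]
      ring
    linarith [hexp ▸ h0]
  have := discrim_le_zero key
  rw [discrim] at this
  nlinarith [this]

lemma wirt2 {a b : ℝ} (hab : a < b) {u : ℝ → ℝ} (hu : ContDiff ℝ 2 u)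
    (ha : u a = 0) (hb : u b = 0) :
    (π / (b - a)) ^ 4 * ∫ t in a..b, u t ^ 2
      ≤ ∫ t in a..b, deriv (deriv u) t ^ 2 := by
  set k : ℝ := π / (b - a) with hk
  have hk0 : 0 < k := div_pos Real.pi_pos (sub_pos.mpr hab)
  have hud : Differentiable ℝ u := hu.differentiable (by norm_num)
  have hc1 : ContDiff ℝ 1 (deriv u) := by
    have h21 : (2 : WithTop ℕ∞) = 1 + 1 := by norm_num
    rw [h21] at hu
    exact (contDiff_succ_iff_deriv.mp hu).2.2
  have hud1 : Differentiable ℝ (deriv u) := hc1.differentiable one_ne_zero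
  have hud2 : Continuous (deriv (deriv u)) := hc1.continuous_deriv le_rfl
  set I0 := ∫ t in a..b, u t ^ 2 with hI0
  set I1 := ∫ t in a..b, deriv u t ^ 2 with hI1
  set I2 := ∫ t in a..b, deriv (deriv u) t ^ 2 with hI2
  -- ∫ u'' u = -I1 by parts
  have hibp : ∫ t in a..b, deriv (deriv u) t * u t = -I1 := by
    have := intervalIntegral.integral_mul_deriv_eq_deriv_mul
      (u := deriv u) (u' := deriv (deriv u)) (v := u) (v' := deriv u)
      (fun x _ => (hud1 x).hasDerivAt) (fun x _ => (hud x).hasDerivAt)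
      (hud2.continuousOn.intervalIntegrable_of_Icc hab.le)
      (hc1.continuous.continuousOn.intervalIntegrable_of_Icc hab.le)
    -- this : ∫ deriv u * deriv u = ... - ∫ deriv (deriv u) * u
    rw [ha, hb] at this
    simp only [mul_zero, sub_zero, zero_sub, zero_mul] at this
    have h2 : ∫ t in a..b, deriv u t * deriv u t = I1 := by
      simp_rw [← sq]
      rfl
    linarith [this ▸ h2]
  have hCS : (∫ t in a..b, deriv (deriv u) t * u t) ^ 2 ≤ I2 * I0 :=
    cs_int hab.le hud2.continuousOn hud.continuous.continuousOn
  have hW : k ^ 2 * I0 ≤ I1 := wirt hab hud hc1.continuous ha hb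
  have hI0nn : 0 ≤ I0 := intervalIntegral.integral_nonneg hab.le (fun t _ => sq_nonneg _)
  have hI2nn : 0 ≤ I2 := intervalIntegral.integral_nonneg hab.le (fun t _ => sq_nonneg _)
  rw [hibp] at hCS
  have hCS' : I1 ^ 2 ≤ I2 * I0 := by rwa [neg_sq] at hCS
  rcases eq_or_lt_of_le hI0nn with h0 | h0
  · rw [← h0, mul_zero]; exact hI2nn
  · have hpos : 0 ≤ k ^ 2 * I0 := by positivity
    have h4 : (k ^ 2 * I0) ^ 2 ≤ I1 ^ 2 := pow_le_pow_left₀ hpos hW 2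
    have h5 : k ^ 4 * I0 * I0 ≤ I2 * I0 := by nlinarith
    exact le_of_mul_le_mul_right h5 h0

/-- Energy method for uniqueness: if `-(π/(b-a))⁴ - p(π/(b-a))² < c ≤ 0` on
`I` and `u` solves `u⁗ - p u'' + c u = 0` with
`u(a)=u(b)=u''(a)=u''(b)=0`, then the energy identity
`∫ (u'')² + p ∫ (u')² + ∫ c u² = 0` holds and `u ≡ 0` on `I`. -/
theorem stmt_19 (a b p : ℝ) (hab : a < b) (hp : 0 ≤ p) (c : ℝ → ℝ)
    (hc : ContinuousOn c (Set.Icc a b))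
    (hclb : ∀ t ∈ Set.Icc a b,
      -(π / (b - a)) ^ 4 - p * (π / (b - a)) ^ 2 < c t)
    (hcub : ∀ t ∈ Set.Icc a b, c t ≤ 0)
    (u : ℝ → ℝ) (hu : ContDiff ℝ 4 u)
    (heq : ∀ t ∈ Set.Icc a b,
      iteratedDeriv 4 u t - p * iteratedDeriv 2 u t + c t * u t = 0)
    (hua : u a = 0) (hub : u b = 0)
    (hua'' : iteratedDeriv 2 u a = 0) (hub'' : iteratedDeriv 2 u b = 0) :
    ((∫ t in a..b, (iteratedDeriv 2 u t) ^ 2) +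
        p * (∫ t in a..b, (deriv u t) ^ 2) +
        (∫ t in a..b, c t * (u t) ^ 2) = 0) ∧
      ∀ t ∈ Set.Icc a b, u t = 0 := by
  have hba : (0:ℝ) < b - a := sub_pos.mpr hab
  have hid2 : iteratedDeriv 2 u = deriv (deriv u) := by
    rw [iteratedDeriv_eq_iterate]; rfl
  have hid4 : iteratedDeriv 4 u = deriv (deriv (deriv (deriv u))) := by
    rw [iteratedDeriv_eq_iterate]; rfl
  rw [hid2] at hua'' hub'' ⊢
  simp only [hid2, hid4] at heq
  set u1 := deriv u with hu1
  set u2 := deriv u1 with hu2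
  set u3 := deriv u2 with hu3
  set u4 := deriv u3 with hu4
  have h41 : (4 : WithTop ℕ∞) = 3 + 1 := by norm_num
  have hc1 : ContDiff ℝ 3 u1 := (contDiff_succ_iff_deriv.mp (h41 ▸ hu)).2.2
  have h31 : (3 : WithTop ℕ∞) = 2 + 1 := by norm_num
  have hc2 : ContDiff ℝ 2 u2 := (contDiff_succ_iff_deriv.mp (h31 ▸ hc1)).2.2
  have h21 : (2 : WithTop ℕ∞) = 1 + 1 := by norm_num
  have hc3 : ContDiff ℝ 1 u3 := (contDiff_succ_iff_deriv.mp (h21 ▸ hc2)).2.2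
  have hdu : Differentiable ℝ u := hu.differentiable (by norm_num)
  have hdu1 : Differentiable ℝ u1 := hc1.differentiable (by norm_num)
  have hdu2 : Differentiable ℝ u2 := hc2.differentiable (by norm_num)
  have hdu3 : Differentiable ℝ u3 := hc3.differentiable one_ne_zero
  have hcu4 : Continuous u4 := hc3.continuous_deriv le_rfl
  have hInt : ∀ {g : ℝ → ℝ}, ContinuousOn g (Icc a b) → IntervalIntegrable g volume a b :=
    fun hg => hg.intervalIntegrable_of_Icc hab.le
  -- integration by parts
  have hA := intervalIntegral.integral_mul_deriv_eq_deriv_mul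
    (u := u3) (u' := u4) (v := u) (v' := u1)
    (fun x _ => (hdu3 x).hasDerivAt) (fun x _ => (hdu x).hasDerivAt)
    (hInt hcu4.continuousOn) (hInt hdu1.continuous.continuousOn)
  have hB := intervalIntegral.integral_mul_deriv_eq_deriv_mul
    (u := u2) (u' := u3) (v := u1) (v' := u2)
    (fun x _ => (hdu2 x).hasDerivAt) (fun x _ => (hdu1 x).hasDerivAt)
    (hInt hdu3.continuous.continuousOn) (hInt hdu2.continuous.continuousOn)
  have hC := intervalIntegral.integral_mul_deriv_eq_deriv_mul
    (u := u1) (u' := u2) (v := u) (v' := u1)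
    (fun x _ => (hdu1 x).hasDerivAt) (fun x _ => (hdu x).hasDerivAt)
    (hInt hdu2.continuous.continuousOn) (hInt hdu1.continuous.continuousOn)
  rw [hua, hub] at hA hC
  rw [hua'', hub''] at hB
  simp only [mul_zero, zero_mul, sub_zero, zero_sub] at hA hB hC
  have hsq2 : ∫ t in a..b, u2 t * u2 t = ∫ t in a..b, u2 t ^ 2 := by simp_rw [← sq]
  have hsq1 : ∫ t in a..b, u1 t * u1 t = ∫ t in a..b, u1 t ^ 2 := by simp_rw [← sq]
  -- hA : ∫ u3 * u1 = - ∫ u4 * u ; hB : ∫ u2 * u2 = - ∫ u3 * u1 ; hC : ∫ u1 * u1 = - ∫ u2 * u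
  have hibp1 : ∫ t in a..b, u4 t * u t = ∫ t in a..b, u2 t ^ 2 := by
    rw [← hsq2, hB, hA]; ring
  have hibp2 : ∫ t in a..b, u2 t * u t = -∫ t in a..b, u1 t ^ 2 := by
    rw [← hsq1, hC]; ring
  -- energy identity
  have hzero : ∫ t in a..b, (u4 t * u t - p * (u2 t * u t) + c t * u t ^ 2) = 0 := by
    have : (0:ℝ) = ∫ t in a..b, (0:ℝ) := by simp
    rw [this]
    apply intervalIntegral.integral_congr
    intro t ht
    rw [uIcc_of_le hab.le] at ht
    have h := heq t ht
    linear_combination (u t) * h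
  have int1 : IntervalIntegrable (fun t => u4 t * u t) volume a b :=
    hInt (hcu4.continuousOn.mul hdu.continuous.continuousOn)
  have int2 : IntervalIntegrable (fun t => p * (u2 t * u t)) volume a b :=
    hInt ((continuous_const.mul (hdu2.continuous.mul hdu.continuous)).continuousOn)
  have int3 : IntervalIntegrable (fun t => c t * u t ^ 2) volume a b :=
    hInt (hc.mul ((hdu.continuous.pow 2).continuousOn))
  rw [intervalIntegral.integral_add (int1.sub int2) int3,
    intervalIntegral.integral_sub int1 int2, intervalIntegral.integral_const_mul] at hzero
  have energy : (∫ t in a..b, u2 t ^ 2) + p * (∫ t in a..b, u1 t ^ 2)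
      + (∫ t in a..b, c t * u t ^ 2) = 0 := by
    rw [hibp1, hibp2] at hzero; linarith
  refine ⟨energy, ?_⟩
  -- Wirtinger inequalities
  set k : ℝ := π / (b - a) with hk
  set lam : ℝ := k ^ 4 + p * k ^ 2 with hlam
  have hW1 : k ^ 2 * ∫ t in a..b, u t ^ 2 ≤ ∫ t in a..b, u1 t ^ 2 :=
    wirt hab hdu hc1.continuous hua hub
  have hW2 : k ^ 4 * ∫ t in a..b, u t ^ 2 ≤ ∫ t in a..b, u2 t ^ 2 :=
    wirt2 hab (hu.of_le (by norm_num)) hua hub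
  have intu2 : IntervalIntegrable (fun t => u t ^ 2) volume a b :=
    hInt ((hdu.continuous.pow 2).continuousOn)
  have intf : IntervalIntegrable (fun t => (c t + lam) * u t ^ 2) volume a b :=
    hInt ((hc.add continuousOn_const).mul ((hdu.continuous.pow 2).continuousOn))
  have hfle : ∫ t in a..b, (c t + lam) * u t ^ 2 ≤ 0 := by
    have hexp : ∫ t in a..b, (c t + lam) * u t ^ 2
        = (∫ t in a..b, c t * u t ^ 2) + lam * ∫ t in a..b, u t ^ 2 := by
      have : ∀ t, (c t + lam) * u t ^ 2 = c t * u t ^ 2 + lam * u t ^ 2 := fun t => by ring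
      simp_rw [this]
      rw [intervalIntegral.integral_add int3 (intu2.const_mul _),
        intervalIntegral.integral_const_mul]
    rw [hexp, hlam]
    have := mul_le_mul_of_nonneg_left hW1 hp
    nlinarith [energy, hW2]
  have hclam : ∀ t ∈ Icc a b, 0 < c t + lam := by
    intro t ht
    have := hclb t ht
    rw [hlam]
    nlinarith
  -- u vanishes on the open interval
  have hIoo : ∀ t ∈ Ioo a b, u t = 0 := by
    by_contra hcon
    push_neg at hcon
    obtain ⟨t1, ht1, hut1⟩ := hcon
    have h0 : 0 ≤ᵐ[(volume : Measure ℝ).restrict (Set.uIoc a b)]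
        fun t => (c t + lam) * u t ^ 2 := by
      rw [uIoc_of_le hab.le]
      filter_upwards [self_mem_ae_restrict measurableSet_Ioc] with t ht
      exact mul_nonneg (hclam t (Ioc_subset_Icc_self ht)).le (sq_nonneg _)
    have hpos : 0 < ∫ t in a..b, (c t + lam) * u t ^ 2 := by
      rw [intervalIntegral.integral_pos_iff_support_of_nonneg_ae' h0 intf]
      refine ⟨hab, ?_⟩
      have hopen : IsOpen (Ioo a b ∩ {t | u t ≠ 0}) :=
        isOpen_Ioo.inter (isOpen_ne_fun hdu.continuous continuous_const)
      have hne : (Ioo a b ∩ {t | u t ≠ 0}).Nonempty := ⟨t1, ht1, hut1⟩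
      refine lt_of_lt_of_le (hopen.measure_pos volume hne) (measure_mono ?_)
      rintro t ⟨htIoo, htne⟩
      refine ⟨?_, Ioo_subset_Ioc_self htIoo⟩
      simp only [Function.mem_support]
      exact mul_ne_zero (hclam t (Ioo_subset_Icc_self htIoo)).ne' (pow_ne_zero 2 htne)
    linarith
  intro t ht
  have hEq : EqOn u 0 (Ioo a b) := fun s hs => hIoo s hs
  have hcl := hEq.closure hdu.continuous continuous_const
  rw [closure_Ioo hab.ne] at hcl
  exact hcl ht
end
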